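/- The space ℝ³ equipped with the ℓ¹-norm ‖x‖₁ = |x 1| + |x 2| + |x 3| has the self-extension property: for every subspace Y of ℝ³₁ and every linear operator T : Y → Y there exists a linear operator S : ℝ³₁ → ℝ³₁ such that S y = T y for all y ∈ Y and ‖S‖ = ‖T‖ (operator norms with respect to the ℓ¹-norm). -/

import Mathlib

/-!
A line is handled by Hahn–Banach and the whole space trivially, so the content is the case of a
plane `Y = ker φ`. An extension `S` of `T` is fixed by its value `w` at one point of `φ = 1`, and
as the norm of an operator on `ℓ¹` is the largest norm of its values at the unit vectors `e i`,
`‖S‖ ≤ ‖T‖` says that `w` lies in three closed balls, one for each `e i` with `φ (e i) ≠ 0`.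
These balls meet pairwise since `T` is bounded by `‖T‖` on `ker φ`, and three pairwise meeting
balls of `ℓ¹` have a common point: the coordinatewise median `m` of the centres lies on a geodesic
between any two of them, so at most one of the balls misses `m`, and the point of the segment from
its centre to `m` on its boundary lies in all three.
-/

open Set Module LinearMap

/-- Lindenstrauss' `n.2.I.P.` for `n = card ι`; taking `i = j` forces the radii to be
nonnegative. -/
def HasBallIntersectionProperty (ι F : Type*) [PseudoMetricSpace F] : Prop :=
  ∀ (c : ι → F) (r : ι → ℝ), (∀ i j, dist (c i) (c j) ≤ r i + r j) → ∃ z, ∀ i, dist z (c i) ≤ r i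

section ThreeBalls

variable {E : Type*} [NormedAddCommGroup E] [NormedSpace ℝ E]

theorem exists_dist_eq_of_le_dist (a m : E) {r : ℝ} (hr : 0 ≤ r) (h : r ≤ dist a m) :
    ∃ z, dist z a = r ∧ dist z m = dist a m - r := by
  have hd : r / dist a m * dist a m = r :=
    div_mul_cancel_of_imp fun h0 => le_antisymm (h0 ▸ h) hr
  refine ⟨AffineMap.lineMap a m (r / dist a m), ?_, ?_⟩
  · rw [dist_lineMap_left, Real.norm_of_nonneg (by positivity), hd]
  · rw [dist_lineMap_right, Real.norm_of_nonneg (sub_nonneg.2 (div_le_one_of_le₀ h dist_nonneg)),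
      sub_mul, one_mul, hd]

theorem exists_dist_le_of_le_dist_of_dist_add_dist_le {a b c m : E} {r s t : ℝ} (hr : 0 ≤ r)
    (ha : r ≤ dist a m) (hab : dist a m + dist b m ≤ r + s) (hac : dist a m + dist c m ≤ r + t) :
    ∃ z, dist z a ≤ r ∧ dist z b ≤ s ∧ dist z c ≤ t := by
  obtain ⟨z, hza, hzm⟩ := exists_dist_eq_of_le_dist a m hr ha
  refine ⟨z, hza.le, ?_, ?_⟩
  · linarith [dist_triangle z m b, dist_comm m b]
  · linarith [dist_triangle z m c, dist_comm m c]

theorem exists_dist_le_of_dist_add_dist_le {a b c m : E} {r s t : ℝ}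
    (hr : 0 ≤ r) (hs : 0 ≤ s) (ht : 0 ≤ t) (hab : dist a m + dist b m ≤ r + s)
    (hac : dist a m + dist c m ≤ r + t) (hbc : dist b m + dist c m ≤ s + t) :
    ∃ z, dist z a ≤ r ∧ dist z b ≤ s ∧ dist z c ≤ t := by
  rcases le_or_gt r (dist a m) with ha | ha
  · exact exists_dist_le_of_le_dist_of_dist_add_dist_le hr ha hab hac
  rcases le_or_gt s (dist b m) with hb | hb
  · obtain ⟨z, hzb, hza, hzc⟩ := exists_dist_le_of_le_dist_of_dist_add_dist_le (b := a) (c := c)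
      (s := r) hs hb (by linarith) hbc
    exact ⟨z, hza, hzb, hzc⟩
  rcases le_or_gt t (dist c m) with hc | hc
  · obtain ⟨z, hzc, hza, hzb⟩ := exists_dist_le_of_le_dist_of_dist_add_dist_le (b := a) (c := b)
      (s := r) (t := s) ht hc (by linarith) (by linarith)
    exact ⟨z, hza, hzb, hzc⟩
  exact ⟨m, (dist_comm m a ▸ ha).le, (dist_comm m b ▸ hb).le, (dist_comm m c ▸ hc).le⟩

end ThreeBalls

def median3 (a b c : ℝ) : ℝ := max (min a b) (min (max a b) c)

theorem median3_mem_uIcc (a b c : ℝ) :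
    median3 a b c ∈ uIcc a b ∧ median3 a b c ∈ uIcc a c ∧ median3 a b c ∈ uIcc b c := by
  simp only [median3, mem_uIcc]
  grind

namespace PiLp

variable {ι : Type*} [Fintype ι]

theorem dist_add_dist_of_forall_mem_uIcc {x y z : PiLp 1 fun _ : ι => ℝ}
    (h : ∀ i, y i ∈ uIcc (x i) (z i)) : dist x y + dist y z = dist x z := by
  simp only [dist_eq_of_L1, ← Finset.sum_add_distrib]
  exact Finset.sum_congr rfl fun i _ =>
    dist_add_dist_of_mem_segment (by rw [segment_eq_uIcc]; exact h i)

theorem hasBallIntersectionProperty_fin_three :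
    HasBallIntersectionProperty (Fin 3) (PiLp 1 fun _ : ι => ℝ) := by
  intro c r h
  have hr i : 0 ≤ r i := by linarith [h i i, dist_self (c i)]
  let m : PiLp 1 fun _ : ι => ℝ := WithLp.toLp 1 fun k => median3 (c 0 k) (c 1 k) (c 2 k)
  have hm k := median3_mem_uIcc (c 0 k) (c 1 k) (c 2 k)
  have h01 := dist_add_dist_of_forall_mem_uIcc (y := m) fun k => (hm k).1
  have h02 := dist_add_dist_of_forall_mem_uIcc (y := m) fun k => (hm k).2.1
  have h12 := dist_add_dist_of_forall_mem_uIcc (y := m) fun k => (hm k).2.2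
  obtain ⟨z, hz0, hz1, hz2⟩ := exists_dist_le_of_dist_add_dist_le (a := c 0) (b := c 1) (c := c 2)
    (m := m) (hr 0) (hr 1) (hr 2) (by linarith [dist_comm m (c 1), h 0 1])
    (by linarith [dist_comm m (c 2), h 0 2]) (by linarith [dist_comm m (c 2), h 1 2])
  exact ⟨z, Fin.forall_fin_succ.2 ⟨hz0, Fin.forall_fin_succ.2 ⟨hz1, Fin.forall_fin_one.2 hz2⟩⟩⟩

end PiLp

section Extension

variable {𝕜 E F : Type*} [RCLike 𝕜] [NormedAddCommGroup E] [NormedSpace 𝕜 E]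
  [NormedAddCommGroup F] [NormedSpace 𝕜 F]

theorem exists_extension_of_span_singleton (v : E) (T : 𝕜 ∙ v →L[𝕜] F) :
    ∃ S : E →L[𝕜] F, (∀ y : 𝕜 ∙ v, S y = T y) ∧ ‖S‖ ≤ ‖T‖ := by
  obtain ⟨g, hg, hgv⟩ := exists_dual_vector'' 𝕜 v
  let v' : 𝕜 ∙ v := ⟨v, Submodule.mem_span_singleton_self v⟩
  refine ⟨g.smulRight ((‖v‖⁻¹ : 𝕜) • T v'), fun ⟨y, hy⟩ => ?_, ?_⟩
  · obtain ⟨a, rfl⟩ := Submodule.mem_span_singleton.1 hy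
    rw [show (⟨a • v, hy⟩ : 𝕜 ∙ v) = a • v' from rfl, map_smul]
    rcases eq_or_ne v 0 with rfl | hv
    · simp [show v' = 0 from rfl]
    · simp [show (v' : E) = v from rfl, hgv, hv]
  · rw [ContinuousLinearMap.norm_smulRight_apply, norm_smul, norm_inv, RCLike.norm_ofReal, abs_norm]
    calc ‖g‖ * (‖v‖⁻¹ * ‖T v'‖) ≤ 1 * (‖v‖⁻¹ * (‖T‖ * ‖v‖)) := by
          gcongr
          exact T.le_opNorm v'
      _ ≤ ‖T‖ := by
          rw [one_mul, mul_left_comm]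
          exact mul_le_of_le_one_right (norm_nonneg T) (inv_mul_le_one (a := ‖v‖))

theorem exists_extension_of_eq_top (T : (⊤ : Submodule 𝕜 E) →L[𝕜] F) :
    ∃ S : E →L[𝕜] F, (∀ y : (⊤ : Submodule 𝕜 E), S y = T y) ∧ ‖S‖ ≤ ‖T‖ :=
  ⟨T.comp (Submodule.topContEquiv (R := 𝕜) (M := E)).symm.toContinuousLinearMap, fun _ => rfl,
    ContinuousLinearMap.opNorm_le_bound _ (norm_nonneg T) fun x =>
      T.le_opNorm ⟨x, Submodule.mem_top⟩⟩

end Extension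

theorem Submodule.exists_ker_eq_of_finrank_quotient_eq_one {K V : Type*} [Field K] [AddCommGroup V]
    [Module K V] {Y : Submodule K V} (hY : finrank K (V ⧸ Y) = 1) :
    ∃ φ : V →ₗ[K] K, φ ≠ 0 ∧ ker φ = Y := by
  have := Module.finite_of_finrank_eq_succ hY
  let ψ : (V ⧸ Y) ≃ₗ[K] K := LinearEquiv.ofFinrankEq _ _ (by rw [hY, finrank_self])
  refine ⟨ψ.toLinearMap ∘ₗ Y.mkQ, fun h => ?_, by
    rw [ker_comp, LinearEquiv.ker, Submodule.comap_bot, Submodule.ker_mkQ]⟩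
  obtain ⟨x, hx⟩ := (ψ.surjective.comp Y.mkQ_surjective) 1
  exact one_ne_zero (hx.symm.trans (LinearMap.congr_fun h x))

variable {F : Type*} [NormedAddCommGroup F] [NormedSpace ℝ F]

section Hyperplane

variable {E : Type*} [NormedAddCommGroup E] [NormedSpace ℝ E] [FiniteDimensional ℝ E]
  {φ : E →ₗ[ℝ] ℝ} {v : E}

noncomputable def kerExtension (T : ker φ →L[ℝ] F) (hv : φ v = 1) (w : F) : E →L[ℝ] F :=
  toContinuousLinearMap <| T.toLinearMap ∘ₗ
      (LinearMap.id - φ.smulRight v).codRestrict (ker φ) (fun x => by simp [hv]) +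
    φ.smulRight w

variable (T : ker φ →L[ℝ] F) (hv : φ v = 1) (w : F)

theorem kerExtension_apply_coe (y : ker φ) : kerExtension T hv w y = T y := by
  have hy : φ y = 0 := y.2
  simp only [kerExtension, map_add, _root_.add_apply, coe_toContinuousLinearMap', coe_comp,
    ContinuousLinearMap.coe_coe, Function.comp_apply, coe_smulRight, hy, zero_smul, add_zero]
  exact congrArg T (Subtype.ext (show (y : E) - φ y • v = y by simp [hy]))

theorem kerExtension_apply_of_apply_eq_one {x : E} (hx : φ x = 1) :
    kerExtension T hv w x = T ⟨x - v, by simp [hx, hv]⟩ + w := by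
  simp only [kerExtension, map_add, _root_.add_apply, coe_toContinuousLinearMap', coe_comp,
    ContinuousLinearMap.coe_coe, Function.comp_apply, coe_smulRight, hx, one_smul, add_left_inj]
  exact congrArg T (Subtype.ext (show x - φ x • v = x - v by simp [hx]))

end Hyperplane

namespace PiLp

variable {ι : Type*} [Fintype ι] [DecidableEq ι]

theorem opNorm_le_of_norm_apply_single_le (S : (PiLp 1 fun _ : ι => ℝ) →L[ℝ] F) {M : ℝ}
    (hM : 0 ≤ M) (h : ∀ i, ‖S (single 1 i 1)‖ ≤ M) : ‖S‖ ≤ M := by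
  refine S.opNorm_le_bound hM fun x => ?_
  conv_lhs => rw [← (basisFun 1 ℝ ι).sum_repr x]
  simp only [basisFun_repr, basisFun_apply, map_sum, map_smul]
  calc ‖∑ i, x i • S (single 1 i 1)‖ ≤ ∑ i, ‖x i‖ * M :=
        (norm_sum_le _ _).trans (Finset.sum_le_sum fun i _ => by
          rw [norm_smul]; exact mul_le_mul_of_nonneg_left (h i) (norm_nonneg _))
    _ = M * ‖x‖ := by rw [norm_eq_of_L1, Finset.mul_sum]; simp_rw [mul_comm]

theorem exists_extension_of_ker (hF : HasBallIntersectionProperty ι F)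
    {φ : (PiLp 1 fun _ : ι => ℝ) →ₗ[ℝ] ℝ} (hφ : φ ≠ 0) (T : ker φ →L[ℝ] F) :
    ∃ S : (PiLp 1 fun _ : ι => ℝ) →L[ℝ] F, (∀ y : ker φ, S y = T y) ∧ ‖S‖ ≤ ‖T‖ := by
  set e : ι → PiLp 1 fun _ : ι => ℝ := fun i => single 1 i 1
  obtain ⟨j, hj⟩ : ∃ j, φ (e j) ≠ 0 := by
    by_contra! h
    exact hφ ((basisFun 1 ℝ ι).ext fun i => by simpa using h i)
  -- `p i` is a point of `φ = 1`, on the line through `e i` when that line meets it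
  set k : ι → ι := fun i => if φ (e i) = 0 then j else i
  have hk i : φ (e (k i)) ≠ 0 := by unfold k; split_ifs with h <;> assumption
  set p : ι → PiLp 1 fun _ : ι => ℝ := fun i => (φ (e (k i)))⁻¹ • e (k i)
  have hp i : φ (p i) = 1 := by simp [p, hk i]
  have hpp i i' : p i' - p i ∈ ker φ := by simp [hp]
  let c i : F := -T ⟨p i - p j, hpp j i⟩
  have hc i i' : dist (c i) (c i') ≤ ‖T‖ * ‖p i‖ + ‖T‖ * ‖p i'‖ := by
    have hsub : (⟨p i - p j, hpp j i⟩ - ⟨p i' - p j, hpp j i'⟩ : ker φ) = ⟨p i - p i', hpp i' i⟩ :=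
      Subtype.ext (sub_sub_sub_cancel_right _ _ _)
    rw [dist_neg_neg, dist_eq_norm, ← map_sub, hsub, ← mul_add]
    exact (T.le_opNorm _).trans
      (mul_le_mul_of_nonneg_left (norm_sub_le (p i) (p i')) (norm_nonneg T))
  obtain ⟨w, hw⟩ := hF c (fun i => ‖T‖ * ‖p i‖) hc
  set S := kerExtension T (hp j) w
  have hSp i : ‖S (p i)‖ ≤ ‖T‖ * ‖p i‖ := by
    rw [kerExtension_apply_of_apply_eq_one T (hp j) w (hp i), add_comm, ← sub_neg_eq_add,
      ← dist_eq_norm]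
    exact hw i
  refine ⟨S, kerExtension_apply_coe T (hp j) w,
    opNorm_le_of_norm_apply_single_le S (norm_nonneg T) fun i => ?_⟩
  have hei : ‖e i‖ = 1 := by simp [e]
  change ‖S (e i)‖ ≤ ‖T‖
  by_cases hi : φ (e i) = 0
  · rw [kerExtension_apply_coe T (hp j) w ⟨e i, hi⟩]
    simpa [hei] using T.le_opNorm ⟨e i, hi⟩
  · have hpi : φ (e i) • p i = e i := by simp [p, k, hi]
    calc ‖S (e i)‖ = ‖S (φ (e i) • p i)‖ := by rw [hpi]
      _ = ‖φ (e i)‖ * ‖S (p i)‖ := by rw [map_smul, norm_smul]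
      _ ≤ ‖φ (e i)‖ * (‖T‖ * ‖p i‖) := by gcongr; exact hSp i
      _ = ‖T‖ := by rw [mul_left_comm, ← norm_smul, hpi, hei, mul_one]

theorem exists_extension_of_card_le_three (hι : Fintype.card ι ≤ 3)
    (hF : HasBallIntersectionProperty ι F) (Y : Submodule ℝ (PiLp 1 fun _ : ι => ℝ))
    (T : Y →L[ℝ] F) :
    ∃ S : (PiLp 1 fun _ : ι => ℝ) →L[ℝ] F, (∀ y : Y, S y = T y) ∧ ‖S‖ ≤ ‖T‖ := by
  have hX : finrank ℝ (PiLp 1 fun _ : ι => ℝ) = Fintype.card ι :=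
    finrank_eq_card_basis (basisFun 1 ℝ ι)
  have hdim := Y.finrank_quotient_add_finrank
  rcases (by omega : finrank ℝ Y ≤ 1 ∨ finrank ℝ (_ ⧸ Y) = 1 ∨ finrank ℝ Y = Fintype.card ι)
    with hY | hY | hY
  · obtain ⟨v, rfl⟩ := ((Y.finrank_le_one_iff_isPrincipal).1 hY).principal
    exact exists_extension_of_span_singleton v T
  · obtain ⟨φ, hφ, rfl⟩ := Submodule.exists_ker_eq_of_finrank_quotient_eq_one hY
    exact exists_extension_of_ker hF hφ T
  · obtain rfl := Submodule.eq_top_of_finrank_eq (hY.trans hX.symm)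
    exact exists_extension_of_eq_top T

end PiLp

theorem selfExt_R3_l1 :
    ∀ (Y : Submodule ℝ (PiLp 1 fun _ : Fin 3 => ℝ)) (T : Y →L[ℝ] Y),
      ∃ S : (PiLp 1 fun _ : Fin 3 => ℝ) →L[ℝ] (PiLp 1 fun _ : Fin 3 => ℝ),
        (∀ y : Y, S y = (T y : PiLp 1 fun _ : Fin 3 => ℝ)) ∧ ‖S‖ = ‖T‖ := by
  intro Y T
  have hT : ‖Y.subtypeL.comp T‖ = ‖T‖ := Y.subtypeₗᵢ.norm_toContinuousLinearMap_comp
  obtain ⟨S, hS, hST⟩ := PiLp.exists_extension_of_card_le_three (by simp)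
    PiLp.hasBallIntersectionProperty_fin_three Y (Y.subtypeL.comp T)
  refine ⟨S, hS, le_antisymm (hST.trans_eq hT) ?_⟩
  have hST' : Y.subtypeL.comp T = S.comp Y.subtypeL := ContinuousLinearMap.ext fun y => (hS y).symm
  calc ‖T‖ = ‖S.comp Y.subtypeL‖ := by rw [← hT, hST']
    _ ≤ ‖S‖ :=
      (S.opNorm_comp_le _).trans (mul_le_of_le_one_right (norm_nonneg S) Y.norm_subtypeL_le)
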